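/- Let κ be a regular cardinal and let C be a κ-geometric category. Then a presheaf of types F : Cᵒᵖ ⥤ Type satisfies the sheaf condition for every presieve of coproduct inclusions — i.e., for every family (Xᵢ) of objects of C indexed by a κ-small type, F is a sheaf for the presieve {ιᵢ : Xᵢ ⟶ ∐ⱼ Xⱼ} of coproduct inclusions (Presieve.IsSheafFor) — if and only if F preserves κ-small products. -/

import Mathlib

/-!
Statement 0: For a regular cardinal `κ` and a `κ`-geometric category `C`, a presheaf of
types `F : Cᵒᵖ ⥤ Type` satisfies the sheaf condition for every presieve of coproduct
inclusions of a `κ`-small family if and only if `F` preserves `κ`-small products.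
-/

open CategoryTheory Limits

universe u

/-- A presheaf `F : Cᵒᵖ ⥤ Type u` preserves `κ`-small products if it sends every coproduct
cocone of a family indexed by a `κ`-small type to a limit cone in `Type u`. -/
def PreservesKappaSmallProducts {C : Type u} [Category.{u} C] (κ : Cardinal.{u})
    (F : Cᵒᵖ ⥤ Type u) : Prop :=
  ∀ {ι : Type u}, Cardinal.mk ι < κ → ∀ (X : ι → C) (c : Cofan X), IsColimit c →
    Nonempty (IsLimit (F.mapCone c.op))

/-- A category `C` with pullbacks is `κ`-geometric if it has coproducts of all `κ`-small
families of objects, and these coproducts are disjoint (the coproduct inclusions are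
monomorphisms, and the pullback of two distinct inclusions is initial) and universal
(pullback along any morphism to the coproduct exhibits the source as the coproduct of
the pullbacks). -/
structure KappaGeometric (κ : Cardinal.{u}) (C : Type u) [Category.{u} C]
    [HasPullbacks C] : Prop where
  hasCoproduct : ∀ {ι : Type u}, Cardinal.mk ι < κ → ∀ X : ι → C, HasCoproduct X
  mono_inj : ∀ {ι : Type u}, Cardinal.mk ι < κ → ∀ (X : ι → C) (c : Cofan X),
    IsColimit c → ∀ i, Mono (c.inj i)
  disjoint : ∀ {ι : Type u}, Cardinal.mk ι < κ → ∀ (X : ι → C) (c : Cofan X),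
    IsColimit c → ∀ i j, i ≠ j → Nonempty (IsInitial (pullback (c.inj i) (c.inj j)))
  universal : ∀ {ι : Type u}, Cardinal.mk ι < κ → ∀ (X : ι → C) (c : Cofan X),
    IsColimit c → ∀ {Y : C} (f : Y ⟶ c.pt),
      Nonempty (IsColimit (Cofan.mk Y (fun i => pullback.snd (c.inj i) f)))

/-!
Both conditions ask that every family `xᵢ ∈ F(Xᵢ)` have a unique amalgamation along the
coproduct inclusions; the sheaf condition asks it only for compatible families. In a disjoint
coproduct every family is compatible: the pullback of an inclusion with itself is trivial since
the inclusions are monic, and the pullback of two distinct inclusions is initial, where `F` takes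
a one-point value because it satisfies the sheaf condition for the empty cover.
-/

namespace CategoryTheory

open Limits Opposite

universe v w w'

variable {C : Type u} [Category.{v} C] (F : Cᵒᵖ ⥤ Type w)

theorem nonempty_isLimit_mapCone_cofan_op_iff {ι : Type w'} {X : ι → C} (c : Cofan X) :
    Nonempty (IsLimit (F.mapCone c.op)) ↔
      ∀ x : ∀ i, F.obj (op (X i)), ∃! t, ∀ i, F.map (c.inj i).op t = x i := by
  rw [Types.isLimit_iff]
  refine ⟨fun h x => ?_, fun h s _ => ?_⟩
  · have := h (fun j => x j.as) (fun {j j'} f => by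
      obtain ⟨i⟩ := j; obtain ⟨i'⟩ := j'
      obtain rfl : i = i' := Discrete.eq_of_hom f
      obtain rfl : f = 𝟙 _ := Subsingleton.elim _ _
      simp)
    simp only [Discrete.forall] at this
    exact this
  · simp only [Discrete.forall]
    exact h (fun i => s ⟨i⟩)

theorem Presieve.subsingleton_of_isSheafFor_ofArrows_of_isEmpty {ι : Type w'} [IsEmpty ι]
    {X : ι → C} {B : C} (π : ∀ i, X i ⟶ B) (h : (Presieve.ofArrows X π).IsSheafFor F) :
    Subsingleton (F.obj (op B)) := by
  rw [Presieve.isSheafFor_arrows_iff] at h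
  obtain ⟨_, -, ht⟩ := h isEmptyElim isEmptyElim
  exact ⟨fun a b => (ht a isEmptyElim).trans (ht b isEmptyElim).symm⟩

theorem Presieve.Arrows.pullbackCompatible_of_mono {ι : Type w'} {X : ι → C} {B : C}
    (π : ∀ i, X i ⟶ B) [(Presieve.ofArrows X π).HasPairwisePullbacks] [∀ i, Mono (π i)]
    (h : ∀ i j, i ≠ j → Subsingleton (F.obj (op (Limits.pullback (π i) (π j)))))
    (x : ∀ i, F.obj (op (X i))) : Presieve.Arrows.PullbackCompatible F π x := by
  intro i j
  by_cases hij : i = j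
  · subst hij
    rw [(cancel_mono (π i)).1 Limits.pullback.condition]
  · exact (h i j hij).elim _ _

noncomputable def Limits.IsInitial.isColimitEmptyCofan {P : C} (hP : IsInitial P) :
    IsColimit (Cofan.mk P (fun x : PEmpty.{w'+1} => (x.elim : x.elim ⟶ P))) :=
  (isColimitEquivIsInitialOfIsEmpty C _).symm hP

end CategoryTheory

theorem statement0 (κ : Cardinal.{u}) (C : Type u) [Category.{u} C]
    [HasPullbacks C] (hC : KappaGeometric κ C) (F : Cᵒᵖ ⥤ Type u) :
    (∀ {ι : Type u}, Cardinal.mk ι < κ → ∀ (X : ι → C) (c : Cofan X), IsColimit c →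
        Presieve.IsSheafFor F (Presieve.ofArrows X c.inj)) ↔
      PreservesKappaSmallProducts κ F := by
  constructor
  · intro hs ι hι X c hc
    have := hC.mono_inj hι X c hc
    have hempty : Cardinal.mk PEmpty.{u+1} < κ := by
      rw [Cardinal.mk_eq_zero]
      exact zero_le.trans_lt hι
    have hdisj (i j : ι) (hij : i ≠ j) :
        Subsingleton (F.obj (Opposite.op (pullback (c.inj i) (c.inj j)))) :=
      let ⟨hP⟩ := hC.disjoint hι X c hc i j hij
      Presieve.subsingleton_of_isSheafFor_ofArrows_of_isEmpty F _
        (hs hempty _ _ (IsInitial.isColimitEmptyCofan hP))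
    rw [nonempty_isLimit_mapCone_cofan_op_iff]
    exact fun x => (Presieve.isSheafFor_arrows_iff_pullbacks F c.inj).1 (hs hι X c hc) x
      (Presieve.Arrows.pullbackCompatible_of_mono F c.inj hdisj x)
  · intro hF ι hι X c hc
    rw [Presieve.isSheafFor_arrows_iff]
    exact fun x _ => (nonempty_isLimit_mapCone_cofan_op_iff F c).1 (hF hι X c hc) x
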